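/- Let X be a complex manifold, T ⊂ X a compact set, and K ⊂ ℂ a convex compact set with 0 ∉ K. Let a_1, …, a_{i_0} ∈ ℂ \ {0} be finitely many points and (c_j)_{j∈ℕ} ⊂ ℂ \ {0} a discrete sequence. Given a holomorphic function β on X, ε > 0 and r, N ∈ ℕ, there exists a holomorphic function f : X × ℂ → ℂ such that: (1) |f(x,ζ)| < ε for all (x,ζ) ∈ T × K; (2) f_x(ζ) = β(x) ζ^r + O(|ζ|^{r+1}) as ζ → 0, for every x ∈ X; (3) f_x(ζ) = O(|ζ − a_i|^N) as ζ → a_i for every i = 1, …, i_0 and every x ∈ X; (4) f_x(c_j) = 0 for every x ∈ X and every j ∈ ℕ. -/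

import Mathlib

open scoped Topology
open Asymptotics Set Filter

noncomputable section

/-- The complex Euclidean space `ℂⁿ`. -/
abbrev Cn (n : ℕ) := EuclideanSpace ℂ (Fin n)

/-- A map is holomorphic on a subset `S` of a complex normed space if near every point of `S`
it agrees on `S` with a map holomorphic on an open neighborhood of that point. -/
def HoloOn {E F : Type} [NormedAddCommGroup E] [NormedSpace ℂ E]
    [NormedAddCommGroup F] [NormedSpace ℂ F] (S : Set E) (f : E → F) : Prop :=
  ∀ p ∈ S, ∃ U : Set E, IsOpen U ∧ p ∈ U ∧ ∃ g : E → F,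
    DifferentiableOn ℂ g U ∧ EqOn f g (S ∩ U)

/-- `X ⊆ ℂ^N` is a closed analytic subset: it is closed and locally cut out by finitely many
holomorphic functions.  By the embedding theorem this is a model for a finite dimensional
reduced Stein space. -/
def IsClosedAnalyticSubset {N : ℕ} (X : Set (Cn N)) : Prop :=
  IsClosed X ∧ ∀ p ∈ X, ∃ U : Set (Cn N), IsOpen U ∧ p ∈ U ∧
    ∃ (m : ℕ) (g : Fin m → Cn N → ℂ), (∀ i, DifferentiableOn ℂ (g i) U) ∧
      X ∩ U = {z ∈ U | ∀ i, g i z = 0}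

/-- `X ⊆ ℂ^N` is a closed complex submanifold of `ℂ^N` (locally biholomorphically
straightened to a coordinate subspace).  By the embedding theorem this is a model for a
Stein manifold. -/
def IsSteinSubmanifold {N : ℕ} (X : Set (Cn N)) : Prop :=
  IsClosed X ∧ ∀ p ∈ X, ∃ (d : ℕ) (U : Set (Cn N)) (φ ψ : Cn N → Cn N),
    IsOpen U ∧ p ∈ U ∧ DifferentiableOn ℂ φ U ∧ IsOpen (φ '' U) ∧
    DifferentiableOn ℂ ψ (φ '' U) ∧ (∀ z ∈ U, ψ (φ z) = z) ∧
    X ∩ U = {z ∈ U | ∀ i : Fin N, d ≤ (i : ℕ) → φ z i = 0}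

/-- `f` is a holomorphic automorphism of `ℂⁿ`. -/
def IsAutCn {n : ℕ} (f : Cn n → Cn n) : Prop :=
  Function.Bijective f ∧ Differentiable ℂ f ∧
    ∃ g : Cn n → Cn n, Differentiable ℂ g ∧
      Function.LeftInverse g f ∧ Function.RightInverse g f

/-- The complex Jacobian matrix of `f` at `z`. -/
def jacMatrix {n : ℕ} (f : Cn n → Cn n) (z : Cn n) : Matrix (Fin n) (Fin n) ℂ :=
  fun i j => fderiv ℂ f z (EuclideanSpace.single j 1) i

/-- The complex Jacobian determinant of `f` at `z`. -/
def jacDet {n : ℕ} (f : Cn n → Cn n) (z : Cn n) : ℂ :=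
  (jacMatrix f z).det

/-- A map `ℂⁿ → ℂⁿ` is volume preserving if its Jacobian determinant is `1` everywhere. -/
def VolumePreserving {n : ℕ} (f : Cn n → Cn n) : Prop :=
  ∀ z, jacDet f z = 1

/-- `f : ℂⁿ → ℂⁿ` is a polynomial map of (total) degree at most `k`. -/
def IsPolyMapDegLe (n k : ℕ) (f : Cn n → Cn n) : Prop :=
  ∃ p : Fin n → MvPolynomial (Fin n) ℂ, (∀ i, (p i).totalDegree ≤ k) ∧
    ∀ z : Cn n, ∀ i : Fin n, f z i = MvPolynomial.eval (fun j => z j) (p i)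

/-- `P` is a holomorphic family, parametrized by `X ⊆ ℂ^N`, of nondegenerate `k`-jets at
`p ∈ ℂⁿ` sending `p` to `q`, i.e. of elements of `J^k_{p,q}(ℂⁿ)`. -/
def IsHolJetFamily {N : ℕ} (X : Set (Cn N)) {n : ℕ} (k : ℕ) (p q : Cn n)
    (P : Cn N → Cn n → Cn n) : Prop :=
  HoloOn (X ×ˢ (univ : Set (Cn n))) (fun w : Cn N × Cn n => P w.1 w.2) ∧
  (∀ x ∈ X, IsPolyMapDegLe n k (P x)) ∧
  (∀ x ∈ X, P x p = q) ∧
  (∀ x ∈ X, (jacMatrix (P x) p).det ≠ 0)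

/-- `F` is a holomorphic family, parametrized by `X`, of holomorphic automorphisms of `ℂⁿ`,
i.e. a holomorphic map `X → Aut(ℂⁿ)`. -/
def IsHolFamilyAut {N n : ℕ} (X : Set (Cn N)) (F : Cn N → Cn n → Cn n) : Prop :=
  (∀ x ∈ X, IsAutCn (F x)) ∧
  HoloOn (X ×ˢ (univ : Set (Cn n))) (fun w : Cn N × Cn n => F w.1 w.2)

/-- The family `F : X → Aut(ℂⁿ)` is nullhomotopic: it is homotopic, through families of
holomorphic automorphisms, to a constant family. -/
def NullhomotopicFamilyAut {N n : ℕ} (X : Set (Cn N)) (F : Cn N → Cn n → Cn n) : Prop :=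
  ∃ H : ℝ → Cn N → Cn n → Cn n,
    ContinuousOn (fun w : ℝ × Cn N × Cn n => H w.1 w.2.1 w.2.2)
      (Icc (0 : ℝ) 1 ×ˢ X ×ˢ (univ : Set (Cn n))) ∧
    (∀ t ∈ Icc (0 : ℝ) 1, ∀ x ∈ X, IsAutCn (H t x)) ∧
    (∀ x ∈ X, H 1 x = F x) ∧
    (∃ f₀, ∀ x ∈ X, H 0 x = f₀)

/-- A matrix-valued map on `X` is nullhomotopic as a map into `GLₙ(ℂ)`: it is homotopic,
through maps with invertible values, to a constant map. -/
def NullhomotopicToGL {N n : ℕ} (X : Set (Cn N)) (Q : Cn N → Matrix (Fin n) (Fin n) ℂ) : Prop :=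
  ∃ H : ℝ → Cn N → Matrix (Fin n) (Fin n) ℂ,
    (∀ i j, ContinuousOn (fun w : ℝ × Cn N => H w.1 w.2 i j) (Icc (0 : ℝ) 1 ×ˢ X)) ∧
    (∀ t ∈ Icc (0 : ℝ) 1, ∀ x ∈ X, (H t x).det ≠ 0) ∧
    (∀ x ∈ X, H 1 x = Q x) ∧
    (∃ A, ∀ x ∈ X, H 0 x = A)

/-- The point `(c, 0, …, 0) ∈ ℂⁿ`. -/
def axisPt (n : ℕ) (c : ℂ) : Cn n :=
  WithLp.toLp 2 (fun i => if (i : ℕ) = 0 then c else 0)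

/-- A sequence in `ℂⁿ` is tame if some holomorphic automorphism takes it to the sequence
`(j, 0, …, 0)`, `j = 1, 2, …`. -/
def TameSeq {n : ℕ} (a : ℕ → Cn n) : Prop :=
  ∃ F : Cn n → Cn n, IsAutCn F ∧ ∀ j : ℕ, F (a j) = axisPt n ((j : ℂ) + 1)

/-- A sequence in `ℂⁿ` is very tame if some volume preserving holomorphic automorphism takes
it to the sequence `(j, 0, …, 0)`, `j = 1, 2, …`. -/
def VeryTameSeq {n : ℕ} (a : ℕ → Cn n) : Prop :=
  ∃ F : Cn n → Cn n, IsAutCn F ∧ VolumePreserving F ∧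
    ∀ j : ℕ, F (a j) = axisPt n ((j : ℂ) + 1)

/-- `X ⊆ ℂ^N` is a (not necessarily closed) complex submanifold of `ℂ^N`;
this is our model for a complex manifold. -/
def IsComplexSubmanifold {N : ℕ} (X : Set (Cn N)) : Prop :=
  ∀ p ∈ X, ∃ (d : ℕ) (U : Set (Cn N)) (φ ψ : Cn N → Cn N),
    IsOpen U ∧ p ∈ U ∧ DifferentiableOn ℂ φ U ∧ IsOpen (φ '' U) ∧
    DifferentiableOn ℂ ψ (φ '' U) ∧ (∀ z ∈ U, ψ (φ z) = z) ∧
    X ∩ U = {z ∈ U | ∀ i : Fin N, d ≤ (i : ℕ) → φ z i = 0}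

/-! We take `f(x, ζ) = β(x) ζ^r A(ζ) W(ζ) e^{s μ ζ}`. Here `A(ζ) = ∏ᵢ (1 - ζ/aᵢ)^N` vanishes
to order `N` at the `aᵢ`, and `W` is a Weierstrass product vanishing at the `c_j`; both equal `1`
at `0`. A real linear functional separating the convex compact set `K` from `0` is
`ζ ↦ Re(μζ)` for some `μ`, so `Re(μζ) ≤ u < 0` on `K`. The factor `e^{s μ ζ}` changes neither
the leading term at `0` nor the zeros, and for large `s` it makes `f` smaller than `ε` on the
compact set `T × K`. -/

lemma HoloOn.continuousOn {E F : Type} [NormedAddCommGroup E] [NormedSpace ℂ E]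
    [NormedAddCommGroup F] [NormedSpace ℂ F] {S : Set E} {f : E → F} (hf : HoloOn S f) :
    ContinuousOn f S := by
  intro p hp
  obtain ⟨U, hUo, hpU, g, hgd, hfg⟩ := hf p hp
  have hfU : ContinuousWithinAt f (S ∩ U) p :=
    ((hgd.continuousOn p hpU).mono inter_subset_right).congr (fun y hy => hfg hy)
      (hfg ⟨hp, hpU⟩)
  exact (continuousWithinAt_inter (hUo.mem_nhds hpU)).mp hfU

lemma HoloOn.mul_differentiable_snd {E : Type} [NormedAddCommGroup E] [NormedSpace ℂ E]
    {S : Set E} {β : E → ℂ} (hβ : HoloOn S β) {g : ℂ → ℂ} (hg : Differentiable ℂ g) :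
    HoloOn (S ×ˢ univ) fun w : E × ℂ => β w.1 * g w.2 := by
  rintro ⟨p, ζ⟩ ⟨hp, -⟩
  obtain ⟨U, hUo, hpU, γ, hγ, hβγ⟩ := hβ p hp
  refine ⟨U ×ˢ univ, hUo.prod isOpen_univ, ⟨hpU, mem_univ _⟩, fun w => γ w.1 * g w.2,
    (hγ.comp differentiableOn_fst fun w hw => hw.1).mul
      (hg.comp differentiable_snd).differentiableOn, ?_⟩
  rintro ⟨x, ζ'⟩ ⟨⟨hx, -⟩, hxU, -⟩
  simp [hβγ ⟨hx, hxU⟩]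

namespace Complex

/-- Weierstrass' elementary factor `E_p(z) = (1 - z) exp (z + z²/2 + ⋯ + zᵖ/p)`. -/
def weierstrassFactor (p : ℕ) (z : ℂ) : ℂ := (1 - z) * exp (-logTaylor (p + 1) (-z))

@[simp] lemma weierstrassFactor_zero_right (p : ℕ) : weierstrassFactor p 0 = 1 := by
  simp [weierstrassFactor, logTaylor_at_zero]

@[simp] lemma weierstrassFactor_one_right (p : ℕ) : weierstrassFactor p 1 = 0 := by
  simp [weierstrassFactor]

lemma differentiable_weierstrassFactor (p : ℕ) : Differentiable ℂ (weierstrassFactor p) := by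
  unfold weierstrassFactor logTaylor
  fun_prop

lemma norm_weierstrassFactor_sub_one_le (p : ℕ) {z : ℂ} (hz : ‖z‖ ≤ 1 / 2) :
    ‖weierstrassFactor p z - 1‖ ≤ 4 * ‖z‖ ^ (p + 1) := by
  have hz1 : ‖z‖ < 1 := hz.trans_lt (by norm_num)
  set L := log (1 - z)⁻¹ + logTaylor (p + 1) (-z)
  have hL : ‖L‖ ≤ 2 * ‖z‖ ^ (p + 1) := by
    refine (norm_log_one_sub_inv_add_logTaylor_neg_le p hz1).trans ?_
    have : (1 - ‖z‖)⁻¹ ≤ 2 := by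
      rw [inv_le_comm₀ (by linarith) two_pos]; linarith
    calc ‖z‖ ^ (p + 1) * (1 - ‖z‖)⁻¹ / (p + 1) ≤ ‖z‖ ^ (p + 1) * 2 / 1 := by
          gcongr; exact_mod_cast Nat.succ_pos p
      _ = 2 * ‖z‖ ^ (p + 1) := by ring
  have hL1 : ‖L‖ ≤ 1 := by
    refine hL.trans ?_
    have : ‖z‖ ^ (p + 1) ≤ ‖z‖ := pow_le_of_le_one (norm_nonneg z) hz1.le p.succ_ne_zero
    linarith
  have hne : 1 - z ≠ 0 := sub_ne_zero.mpr fun h => by simp [← h] at hz1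
  have hE : weierstrassFactor p z = exp (-L) := by
    rw [weierstrassFactor, neg_add, exp_add, exp_neg (log _), exp_log (inv_ne_zero hne), inv_inv]
  calc ‖weierstrassFactor p z - 1‖ = ‖exp (-L) - 1‖ := by rw [hE]
    _ ≤ 2 * ‖-L‖ := norm_exp_sub_one_le (by rwa [norm_neg])
    _ ≤ 4 * ‖z‖ ^ (p + 1) := by rw [norm_neg]; linarith

lemma hasProdLocallyUniformlyOn_weierstrassFactor {c : ℕ → ℂ}
    (hc : Tendsto c atTop (cocompact ℂ)) :
    HasProdLocallyUniformlyOn (fun j z => weierstrassFactor j (z / c j))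
      (fun z => ∏' j, weierstrassFactor j (z / c j)) univ := by
  refine hasProdLocallyUniformlyOn_of_forall_compact isOpen_univ fun K _ hK => ?_
  obtain ⟨R, hR⟩ := hK.isBounded.subset_closedBall 0
  have hbound : ∀ᶠ j in atTop, ∀ z ∈ K,
      ‖weierstrassFactor j (z / c j) - 1‖ ≤ 4 * (1 / 2) ^ (j + 1) := by
    filter_upwards [(tendsto_norm_cocompact_atTop.comp hc).eventually_ge_atTop (2 * R)]
      with j hj z hz
    have hzR : ‖z‖ ≤ R := by simpa using hR hz
    have hzc : ‖z / c j‖ ≤ 1 / 2 := by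
      rw [norm_div]
      have hcj : 2 * R ≤ ‖c j‖ := hj
      exact div_le_of_le_mul₀ (norm_nonneg _) (by norm_num) (by linarith)
    refine (norm_weierstrassFactor_sub_one_le j hzc).trans ?_
    gcongr
  have hsum : Summable fun j : ℕ => 4 * (1 / 2 : ℝ) ^ (j + 1) :=
    ((summable_nat_add_iff 1).mpr
      (summable_geometric_of_lt_one (by norm_num) (by norm_num))).mul_left 4
  have hcont (j : ℕ) : ContinuousOn (fun z => weierstrassFactor j (z / c j) - 1) K :=
    ((differentiable_weierstrassFactor j).comp (differentiable_id.div_const _)).continuous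
      |>.continuousOn.sub continuousOn_const
  simpa using Summable.hasProdUniformlyOn_nat_one_add hK hsum hbound hcont

theorem exists_differentiable_eq_one_at_zero_and_zero_on_range {c : ℕ → ℂ}
    (hc0 : ∀ j, c j ≠ 0) (hc : Tendsto c atTop (cocompact ℂ)) :
    ∃ W : ℂ → ℂ, Differentiable ℂ W ∧ W 0 = 1 ∧ ∀ j, W (c j) = 0 := by
  refine ⟨fun z => ∏' j, weierstrassFactor j (z / c j), ?_, by simp, fun j => ?_⟩
  · rw [← differentiableOn_univ]
    refine (hasProdLocallyUniformlyOn_weierstrassFactor hc).differentiableOn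
      (.of_forall fun s => ?_) isOpen_univ
    exact (Differentiable.fun_finsetProd fun j _ =>
      (differentiable_weierstrassFactor j).comp (differentiable_id.div_const _)).differentiableOn
  · exact tprod_of_exists_eq_zero ⟨j, by simp [div_self (hc0 j)]⟩

end Complex

lemma Asymptotics.IsBigO.mul_continuousAt {α R : Type*} [TopologicalSpace α]
    [SeminormedRing R]
    {f h : α → R} {g : α → ℝ} {x : α} (hf : f =O[𝓝 x] g) (hh : ContinuousAt h x) :
    (fun y => f y * h y) =O[𝓝 x] g := by
  simpa using hf.mul (hh.tendsto.isBigO_one ℝ)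

lemma isBigO_prod_one_sub_div_pow {ι : Type*} (s : Finset ι) (a : ι → ℂ) {i : ι}
    (hi : i ∈ s) (ha : a i ≠ 0) (N : ℕ) :
    (fun ζ => ∏ k ∈ s, (1 - ζ / a k) ^ N) =O[𝓝 (a i)] fun ζ => ‖ζ - a i‖ ^ N := by
  classical
  have hfactor (ζ : ℂ) : ∏ k ∈ s, (1 - ζ / a k) ^ N
      = (ζ - a i) ^ N * ((-(a i)⁻¹) ^ N * ∏ k ∈ s.erase i, (1 - ζ / a k) ^ N) := by
    rw [← Finset.mul_prod_erase s _ hi, ← mul_assoc, ← mul_pow]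
    field_simp
    ring
  simp_rw [hfactor]
  refine IsBigO.mul_continuousAt (isBigO_of_le _ fun ζ => ?_) (by fun_prop)
  simp

lemma isBigO_pow_mul_sub_pow {H : ℂ → ℂ} (hH : DifferentiableAt ℂ H 0) (hH0 : H 0 = 1)
    (r : ℕ) :
    (fun ζ => ζ ^ r * H ζ - ζ ^ r) =O[𝓝 0] fun ζ => ‖ζ‖ ^ (r + 1) := by
  have h1 : (fun ζ => H ζ - 1) =O[𝓝 0] fun ζ => ζ := by simpa [hH0] using hH.isBigO_sub
  have h2 := (isBigO_refl (fun ζ : ℂ => ζ ^ r) _).mul h1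
  refine (h2.congr_left fun ζ => by ring).trans (isBigO_of_le _ fun ζ => ?_)
  simp [pow_succ]

open Complex in
lemma exists_re_mul_lt_neg_of_isCompact_of_convex {K : Set ℂ} (hKcp : IsCompact K)
    (hKcv : Convex ℝ K) (h0K : (0 : ℂ) ∉ K) : ∃ μ : ℂ, ∃ u < 0, ∀ ζ ∈ K, (μ * ζ).re < u := by
  obtain ⟨φ, u, v, hu, huv, hv⟩ := geometric_hahn_banach_compact_closed hKcv hKcp
    (convex_singleton 0) isClosed_singleton (disjoint_singleton_right.mpr h0K)
  refine ⟨φ 1 - φ I * I, u, huv.trans (by simpa using hv 0 rfl), fun ζ hζ => ?_⟩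
  have hφ : φ ζ = φ 1 * ζ.re + φ I * ζ.im := by
    conv_lhs => rw [show ζ = ζ.re • (1 : ℂ) + ζ.im • I by simp [real_smul]]
    simp only [map_add, map_smul, smul_eq_mul]
    ring
  simpa [mul_re, hφ] using hu ζ hζ

lemma exists_forall_norm_mul_cexp_lt {α : Type*} [TopologicalSpace α] {S : Set α}
    (hS : IsCompact S) {F ℓ : α → ℂ} (hF : ContinuousOn F S) {u : ℝ} (hu : u < 0)
    (hℓ : ∀ y ∈ S, (ℓ y).re ≤ u) {ε : ℝ} (hε : 0 < ε) :
    ∃ s : ℝ, ∀ y ∈ S, ‖F y * Complex.exp (s * ℓ y)‖ < ε := by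
  obtain ⟨C, hC⟩ := hS.exists_bound_of_continuousOn hF
  have hdecay : Tendsto (fun s : ℝ => max C 0 * Real.exp (s * u)) atTop (𝓝 0) := by
    simpa using (Real.tendsto_exp_atBot.comp
      (tendsto_id.atTop_mul_const_of_neg hu)).const_mul (max C 0)
  obtain ⟨s, hsε, hs0⟩ := ((hdecay.eventually_lt_const hε).and (eventually_ge_atTop 0)).exists
  refine ⟨s, fun y hy => lt_of_le_of_lt ?_ hsε⟩
  rw [norm_mul, Complex.norm_exp]
  gcongr
  · exact (hC y hy).trans (le_max_left _ _)
  · simpa using mul_le_mul_of_nonneg_left (hℓ y hy) hs0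

theorem technical_lemma_general
    {M : ℕ} (X : Set (Cn M))
    (T : Set (Cn M)) (hTcp : IsCompact T) (hTX : T ⊆ X)
    (K : Set ℂ) (hKcp : IsCompact K) (hKcv : Convex ℝ K) (h0K : (0 : ℂ) ∉ K)
    (i₀ : ℕ) (a : Fin i₀ → ℂ) (ha : ∀ i, a i ≠ 0)
    (c : ℕ → ℂ) (hc0 : ∀ j, c j ≠ 0) (hcdisc : Tendsto c atTop (cocompact ℂ))
    (β : Cn M → ℂ) (hβ : HoloOn X β)
    (ε : ℝ) (hε : 0 < ε) (r Nd : ℕ) :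
    ∃ f : Cn M × ℂ → ℂ, HoloOn (X ×ˢ (univ : Set ℂ)) f ∧
      (∀ x ∈ T, ∀ ζ ∈ K, ‖f (x, ζ)‖ < ε) ∧
      (∀ x ∈ X, (fun ζ : ℂ => f (x, ζ) - β x * ζ ^ r) =O[𝓝 (0 : ℂ)]
        fun ζ : ℂ => ‖ζ‖ ^ (r + 1)) ∧
      (∀ x ∈ X, ∀ i : Fin i₀,
        (fun ζ : ℂ => f (x, ζ)) =O[𝓝 (a i)] fun ζ : ℂ => ‖ζ - a i‖ ^ Nd) ∧
      (∀ x ∈ X, ∀ j : ℕ, f (x, c j) = 0) := by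
  obtain ⟨W, hWd, hW0, hWc⟩ :=
    Complex.exists_differentiable_eq_one_at_zero_and_zero_on_range hc0 hcdisc
  obtain ⟨μ, u, hu, hμK⟩ := exists_re_mul_lt_neg_of_isCompact_of_convex hKcp hKcv h0K
  set A : ℂ → ℂ := fun ζ => ∏ i, (1 - ζ / a i) ^ Nd
  have hAd : Differentiable ℂ A := by fun_prop
  have hWcont : Continuous W := hWd.continuous
  have hGc : Continuous fun ζ => ζ ^ r * A ζ * W ζ := by fun_prop
  obtain ⟨s, hs⟩ := exists_forall_norm_mul_cexp_lt (hTcp.prod hKcp)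
    (F := fun w => β w.1 * (w.2 ^ r * A w.2 * W w.2)) (ℓ := fun w => μ * w.2)
    (((hβ.continuousOn.mono hTX).comp continuousOn_fst fun w hw => hw.1).mul
      (hGc.comp continuous_snd).continuousOn)
    hu (fun w hw => (hμK w.2 hw.2).le) hε
  set g : ℂ → ℂ := fun ζ => ζ ^ r * A ζ * W ζ * Complex.exp (s * (μ * ζ))
  refine ⟨fun w => β w.1 * g w.2, hβ.mul_differentiable_snd (by fun_prop),
    fun x hx ζ hζ => ?_, fun x _ => ?_, fun x _ i => ?_, fun x _ j => by simp [g, hWc]⟩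
  · simpa [g, mul_assoc] using hs (x, ζ) ⟨hx, hζ⟩
  · have h := isBigO_pow_mul_sub_pow (H := fun ζ => A ζ * W ζ * Complex.exp (s * (μ * ζ)))
      (by fun_prop) (by simp [A, hW0]) r
    exact (h.const_mul_left (β x)).congr_left fun ζ => by ring
  · have h := (isBigO_prod_one_sub_div_pow Finset.univ a (Finset.mem_univ i) (ha i) Nd)
      |>.mul_continuousAt (h := fun ζ => β x * ζ ^ r * W ζ * Complex.exp (s * (μ * ζ)))
        (by fun_prop)
    exact h.congr_left fun ζ => by ring

/-- Lemma 2.6: existence of a holomorphic function `f : X × ℂ → ℂ` which is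
small on `T × K`, has prescribed leading term `β(x) ζ^r` at `ζ = 0`, vanishes to order `N`
at the points `a_i ≠ 0`, and vanishes at the points of a discrete sequence `(c_j) ⊆ ℂ \ {0}`. -/
theorem technical_lemma
    {M : ℕ} (X : Set (Cn M)) (hX : IsComplexSubmanifold X)
    (T : Set (Cn M)) (hTcp : IsCompact T) (hTX : T ⊆ X)
    (K : Set ℂ) (hKcp : IsCompact K) (hKcv : Convex ℝ K) (h0K : (0 : ℂ) ∉ K)
    (i₀ : ℕ) (a : Fin i₀ → ℂ) (ha : ∀ i, a i ≠ 0)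
    (c : ℕ → ℂ) (hc0 : ∀ j, c j ≠ 0) (hcdisc : Tendsto c atTop (cocompact ℂ))
    (β : Cn M → ℂ) (hβ : HoloOn X β)
    (ε : ℝ) (hε : 0 < ε) (r Nd : ℕ) (hr : 1 ≤ r) (hNd : 1 ≤ Nd) :
    ∃ f : Cn M × ℂ → ℂ, HoloOn (X ×ˢ (univ : Set ℂ)) f ∧
      (∀ x ∈ T, ∀ ζ ∈ K, ‖f (x, ζ)‖ < ε) ∧
      (∀ x ∈ X, (fun ζ : ℂ => f (x, ζ) - β x * ζ ^ r) =O[𝓝 (0 : ℂ)]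
        fun ζ : ℂ => ‖ζ‖ ^ (r + 1)) ∧
      (∀ x ∈ X, ∀ i : Fin i₀,
        (fun ζ : ℂ => f (x, ζ)) =O[𝓝 (a i)] fun ζ : ℂ => ‖ζ - a i‖ ^ Nd) ∧
      (∀ x ∈ X, ∀ j : ℕ, f (x, c j) = 0) :=
  technical_lemma_general X T hTcp hTX K hKcp hKcv h0K i₀ a ha c hc0 hcdisc β hβ ε hε r Nd
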